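/- Let H be a Hopf algebra over a field k and let W_H be the subalgebra of S(t_H)_Θ generated by the elements p_x = t_{x_1} t_{S(x_2)} and q_{x,y} = t_{x_1} t_{y_1} t_{S(x_2 y_2)} for all x, y ∈ H. Then W_H is a left coideal subalgebra of S(t_H)_Θ, i.e., Δ(W_H) ⊆ S(t_H)_Θ ⊗ W_H; explicitly, Δ(p_x) = t_{x_1} t_{S(x_3)} ⊗ p_{x_2} and Δ(q_{x,y}) = t_{x_1} t_{y_1} t_{S(x_3 y_3)} ⊗ q_{x_2, y_2}. -/

import Mathlib

open TensorProduct

noncomputable section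

universe v

/-- A submodule `S` of a coalgebra `C` is a subcoalgebra if `Δ(S) ⊆ S ⊗ S`. -/
def IsSubcoalg (k : Type*) [Field k] {C : Type*} [AddCommGroup C] [Module k C] [Coalgebra k C]
    (S : Submodule k C) : Prop :=
  ∀ x ∈ S, Coalgebra.comul (R := k) x ∈
    LinearMap.range (TensorProduct.map S.subtype S.subtype)

/-- A coalgebra is pointed if every simple subcoalgebra is one-dimensional. -/
def IsPointedCoalg (k C : Type*) [Field k] [AddCommGroup C] [Module k C] [Coalgebra k C] : Prop :=
  ∀ S : Submodule k C, IsSubcoalg k S → S ≠ ⊥ →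
    (∀ T : Submodule k C, IsSubcoalg k T → T < S → T = ⊥) →
    Module.finrank k S = 1

/-- A group-like element: `ε(g) = 1` and `Δ(g) = g ⊗ g`. -/
def IsGpLike (k : Type*) [Field k] {C : Type*} [AddCommGroup C] [Module k C] [Coalgebra k C]
    (g : C) : Prop :=
  Coalgebra.counit (R := k) g = 1 ∧ Coalgebra.comul (R := k) g = g ⊗ₜ[k] g

/-- Data exhibiting `A` as the free commutative Hopf algebra `S(t_C)_Θ` on a coalgebra `C`. -/
structure FreeCommHopfData (k : Type*) [Field k] (C : Type*) [AddCommGroup C] [Module k C]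
    [Coalgebra k C] (A : Type*) [CommRing A] [HopfAlgebra k A] where
  t : C →ₗ[k] A
  tinv : C →ₗ[k] A
  comul_t : ∀ x : C, Coalgebra.comul (R := k) (t x) = TensorProduct.map t t (Coalgebra.comul x)
  comul_tinv : ∀ x : C, Coalgebra.comul (R := k) (tinv x)
      = TensorProduct.map tinv tinv (TensorProduct.comm k C C (Coalgebra.comul (R := k) x))
  counit_t : ∀ x : C, Coalgebra.counit (R := k) (t x) = Coalgebra.counit (R := k) x
  counit_tinv : ∀ x : C, Coalgebra.counit (R := k) (tinv x) = Coalgebra.counit (R := k) x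
  mul_t_tinv : ∀ x : C, LinearMap.mul' k A (TensorProduct.map t tinv (Coalgebra.comul (R := k) x))
      = Coalgebra.counit (R := k) x • (1 : A)
  mul_tinv_t : ∀ x : C, LinearMap.mul' k A (TensorProduct.map tinv t (Coalgebra.comul (R := k) x))
      = Coalgebra.counit (R := k) x • (1 : A)
  antipode_t : ∀ x : C, HopfAlgebra.antipode (R := k) (t x) = tinv x
  antipode_tinv : ∀ x : C, HopfAlgebra.antipode (R := k) (tinv x) = t x
  injective_t : Function.Injective t
  isDomain : IsDomain A
  adjoin_eq_top : Algebra.adjoin k (Set.range t ∪ Set.range tinv) = ⊤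
  universal : ∀ {A' : Type v} [CommRing A'] [HopfAlgebra k A'] (f : C →ₗ[k] A'),
      (∀ x : C, Coalgebra.comul (R := k) (f x) = TensorProduct.map f f (Coalgebra.comul (R := k) x)) →
      (∀ x : C, Coalgebra.counit (R := k) (f x) = Coalgebra.counit (R := k) x) →
      ∃! φ : A →ₐc[k] A', ∀ x : C, φ (t x) = f x

/-- Data exhibiting `Hab` as the largest commutative Hopf algebra quotient of `H`. -/
structure HabData (k : Type*) [Field k] (H : Type*) [Ring H] [HopfAlgebra k H]
    (Hab : Type*) [CommRing Hab] [HopfAlgebra k Hab] where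
  q : H →ₐc[k] Hab
  surjective_q : Function.Surjective q
  universal : ∀ {B : Type v} [CommRing B] [HopfAlgebra k B] (f : H →ₐc[k] B),
      ∃! g : Hab →ₐc[k] B, ∀ x : H, g (q x) = f x

variable {k : Type*} [Field k]

section Generic

variable {H : Type*} [Ring H] [HopfAlgebra k H] {A : Type*} [CommRing A] [HopfAlgebra k A]

/-- σ(x,y) = t_{x₁} t_{y₁} t⁻¹_{x₂ y₂}. -/
def sigmaElem (F : FreeCommHopfData k H A) (x y : H) : A :=
  (LinearMap.mul' k A).comp
    ((TensorProduct.map (LinearMap.mul' k A) LinearMap.id).comp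
      ((TensorProduct.map (TensorProduct.map F.t F.t) (F.tinv.comp (LinearMap.mul' k H))).comp
        (TensorProduct.tensorTensorTensorComm k H H H H).toLinearMap))
    ((Coalgebra.comul (R := k) x) ⊗ₜ[k] (Coalgebra.comul (R := k) y))

/-- σ⁻¹(x,y) = t_{x₁ y₁} t⁻¹_{x₂} t⁻¹_{y₂}. -/
def sigmaInvElem (F : FreeCommHopfData k H A) (x y : H) : A :=
  (LinearMap.mul' k A).comp
    ((TensorProduct.map LinearMap.id (LinearMap.mul' k A)).comp
      ((TensorProduct.map (F.t.comp (LinearMap.mul' k H)) (TensorProduct.map F.tinv F.tinv)).comp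
        (TensorProduct.tensorTensorTensorComm k H H H H).toLinearMap))
    ((Coalgebra.comul (R := k) x) ⊗ₜ[k] (Coalgebra.comul (R := k) y))

/-- The generic base algebra B_H. -/
def genericBase (F : FreeCommHopfData k H A) : Subalgebra k A :=
  Algebra.adjoin k ({a | ∃ x y : H, a = sigmaElem F x y} ∪ {a | ∃ x y : H, a = sigmaInvElem F x y})

/-- The coaction δ_S = (id ⊗ q̃) ∘ Δ of H_ab on S(t_H)_Θ, as an algebra map. -/
def coactS {Hab : Type*} [CommRing Hab] [HopfAlgebra k Hab] (qt : A →ₐc[k] Hab) :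
    A →ₐ[k] A ⊗[k] Hab :=
  (Algebra.TensorProduct.map (AlgHom.id k A) (qt : A →ₐ[k] Hab)).comp (Bialgebra.comulAlgHom k A)

/-- The subalgebra C_H of right H_ab-coinvariants of S(t_H)_Θ. -/
def coinvCH {Hab : Type*} [CommRing Hab] [HopfAlgebra k Hab] (qt : A →ₐc[k] Hab) :
    Subalgebra k A :=
  AlgHom.equalizer (coactS qt) Algebra.TensorProduct.includeLeft

end Generic

/-- `B` is a localization of `A` (inside an ambient commutative ring `R`): `A ⊆ B`, and `B` is
obtained from `A` by inverting a multiplicative subset of `A`. -/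
def IsLocalizationOfSet {R : Type*} [CommRing R] (A B : Set R) : Prop :=
  A ⊆ B ∧ ∃ M : Submonoid R, (M : Set R) ⊆ A ∧ (∀ m ∈ M, ∃ b ∈ B, m * b = 1) ∧
    ∀ b ∈ B, ∃ m ∈ M, b * m ∈ A


section PI

variable {H : Type*} [Ring H] [HopfAlgebra k H] {A : Type*} [CommRing A] [HopfAlgebra k A]

/-- The coaction δ_T of H on the tensor algebra T(X_H), with δ_T(X_x) = X_{x₁} ⊗ x₂. -/
def coactT (k : Type*) [Field k] (H : Type*) [Ring H] [HopfAlgebra k H] :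
    TensorAlgebra k H →ₐ[k] TensorAlgebra k H ⊗[k] H :=
  TensorAlgebra.lift k
    ((TensorProduct.map (TensorAlgebra.ι k) LinearMap.id).comp
      (Coalgebra.comul (R := k) (A := H)))

/-- The universal comodule algebra map μ : T(X_H) → S(t_H) ⊗ H, μ(X_x) = t_{x₁} ⊗ x₂. -/
def muMap (F : FreeCommHopfData k H A) : TensorAlgebra k H →ₐ[k] A ⊗[k] H :=
  TensorAlgebra.lift k
    ((TensorProduct.map F.t LinearMap.id).comp (Coalgebra.comul (R := k) (A := H)))

/-- p_x = t_{x₁} t_{S(x₂)}, as a linear function of x. -/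
def pMap (F : FreeCommHopfData k H A) : H →ₗ[k] A :=
  (LinearMap.mul' k A).comp
    ((TensorProduct.map F.t (F.t.comp (HopfAlgebra.antipode (R := k)))).comp
      (Coalgebra.comul (R := k)))

/-- q_{x,y} = t_{x₁} t_{y₁} t_{S(x₂ y₂)}, as a linear function of x ⊗ y. -/
def qMap (F : FreeCommHopfData k H A) : H ⊗[k] H →ₗ[k] A :=
  ((LinearMap.mul' k A).comp
    ((TensorProduct.map (LinearMap.mul' k A) LinearMap.id).comp
      ((TensorProduct.map (TensorProduct.map F.t F.t)
          ((F.t.comp ((HopfAlgebra.antipode (R := k)).comp (LinearMap.mul' k H))))).comp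
        (TensorProduct.tensorTensorTensorComm k H H H H).toLinearMap))).comp
    (TensorProduct.map (Coalgebra.comul (R := k)) (Coalgebra.comul (R := k)))

/-- P_x = X_{x₁} X_{S(x₂)} in the tensor algebra. -/
def PElem (k : Type*) [Field k] {H : Type*} [Ring H] [HopfAlgebra k H] (x : H) :
    TensorAlgebra k H :=
  (LinearMap.mul' k (TensorAlgebra k H))
    ((TensorProduct.map (TensorAlgebra.ι k)
      ((TensorAlgebra.ι k).comp (HopfAlgebra.antipode (R := k)))) (Coalgebra.comul (R := k) x))

/-- Q_{x,y} = X_{x₁} X_{y₁} X_{S(x₂ y₂)} in the tensor algebra. -/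
def QElem (k : Type*) [Field k] {H : Type*} [Ring H] [HopfAlgebra k H] (x y : H) :
    TensorAlgebra k H :=
  (LinearMap.mul' k (TensorAlgebra k H))
    ((TensorProduct.map (LinearMap.mul' k (TensorAlgebra k H)) LinearMap.id)
      ((TensorProduct.map (TensorProduct.map (TensorAlgebra.ι k) (TensorAlgebra.ι k))
          ((TensorAlgebra.ι k).comp ((HopfAlgebra.antipode (R := k)).comp (LinearMap.mul' k H))))
        ((TensorProduct.tensorTensorTensorComm k H H H H)
          ((Coalgebra.comul (R := k) x) ⊗ₜ[k] (Coalgebra.comul (R := k) y)))))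

/-- μ̄(V_H): the image in S(t_H) ⊆ A of the coinvariants of the universal comodule algebra. -/
def VHSet (F : FreeCommHopfData k H A) : Set A :=
  {a : A | ∃ u : TensorAlgebra k H, muMap F u = a ⊗ₜ[k] 1}

/-- `a` is a monomial of degree ≤ m (and ≥ 1) in the t-variables. -/
def IsTMonomialLe (F : FreeCommHopfData k H A) (m : ℕ) (a : A) : Prop :=
  ∃ d : ℕ, 1 ≤ d ∧ d ≤ m ∧ ∃ f : Fin d → H, a = ∏ j, F.t (f j)

/-- `a` is a monomial of degree ≤ m in the variables t_g, g group-like. -/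
def IsTGpMonomialLe (F : FreeCommHopfData k H A) (m : ℕ) (a : A) : Prop :=
  ∃ d : ℕ, 1 ≤ d ∧ d ≤ m ∧ ∃ f : Fin d → H, (∀ j, IsGpLike k (f j)) ∧ a = ∏ j, F.t (f j)

end PI

/-- Data exhibiting `H` as the Hopf algebra O_k(G) of k-valued functions on a finite group `G`. -/
structure FunAlgData (k : Type*) [Field k] (G : Type*) [Group G] [Fintype G] [DecidableEq G]
    (H : Type*) [CommRing H] [HopfAlgebra k H] where
  e : Module.Basis G k H
  mul_e : ∀ g h : G, e g * e h = if g = h then e g else 0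
  sum_e : ∑ g : G, e g = 1
  comul_e : ∀ g : G, Coalgebra.comul (R := k) (e g) = ∑ h : G, e (g * h⁻¹) ⊗ₜ[k] e h
  counit_e : ∀ g : G, Coalgebra.counit (R := k) (e g) = if g = 1 then (1 : k) else 0
  antipode_e : ∀ g : G, HopfAlgebra.antipode (R := k) (e g) = e g⁻¹

/-!
Write `ιₗ a = a ⊗ 1` and `ιᵣ a = 1 ⊗ a`. In the convolution algebra of linear maps `C → A ⊗ A`,
`Δ ∘ φ = ιₗ φ * ιᵣ φ` for a coalgebra map `φ`, and `Δ ∘ g = ιᵣ g * ιₗ g` for an anti-coalgebra map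
`g` such as `t ∘ S`. As `Δ` is multiplicative, `Δ ∘ (φ * g) = ιₗ φ * ιᵣ (φ * g) * ιₗ g`, that is
`Δ((φ * g)(c)) = φ(c₁) g(c₃) ⊗ (φ * g)(c₂)`. Both `p = t * (t ∘ S)` on `H` and
`q = m(t ⊗ t) * (t ∘ S ∘ m)` on the coalgebra `H ⊗ H` have this shape, so `Δ` maps the generators,
and hence all of `W_H`, into the subalgebra `A ⊗ W_H` of `A ⊗ A`.
-/

open Coalgebra HopfAlgebra WithConv

def Subalgebra.IsLeftCoideal {R A : Type*} [CommSemiring R] [Semiring A] [Bialgebra R A]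
    (W : Subalgebra R A) : Prop :=
  ∀ a ∈ W, comul (R := R) a ∈
    LinearMap.range
      (TensorProduct.map (LinearMap.id : A →ₗ[R] A) (Subalgebra.toSubmodule W).subtype)

section Convolution

variable {R C B : Type*} [CommSemiring R] [AddCommMonoid C] [Module R C] [Coalgebra R C]
  [Semiring B]

local notation "ιₗ" =>
  AlgHom.toLinearMap (Algebra.TensorProduct.includeLeft (R := R) (S := R) (A := B) (B := B))
local notation "ιᵣ" =>
  AlgHom.toLinearMap (Algebra.TensorProduct.includeRight (R := R) (A := B) (B := B))

section Algebra

variable [Algebra R B]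

theorem convMul_includeLeft_includeRight (f₁ f₂ : C →ₗ[R] B) :
    toConv (ιₗ ∘ₗ f₁) * toConv (ιᵣ ∘ₗ f₂) = toConv (TensorProduct.map f₁ f₂ ∘ₗ comul) := by
  ext c
  simp [← (Coalgebra.Repr.arbitrary R c).eq, Algebra.TensorProduct.tmul_mul_tmul]

theorem convMul_includeRight_includeLeft (f₁ f₂ : C →ₗ[R] B) :
    toConv (ιᵣ ∘ₗ f₁) * toConv (ιₗ ∘ₗ f₂) =
      toConv (TensorProduct.map f₂ f₁ ∘ₗ (TensorProduct.comm R C C).toLinearMap ∘ₗ comul) := by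
  ext c
  simp [← (Coalgebra.Repr.arbitrary R c).eq, Algebra.TensorProduct.tmul_mul_tmul]

theorem convMul_apply_mem {T : Subalgebra R B} {f g : C →ₗ[R] B} (hf : ∀ c, f c ∈ T)
    (hg : ∀ c, g c ∈ T) (c : C) : (toConv f * toConv g) c ∈ T := by
  rw [(Coalgebra.Repr.arbitrary R c).convMul_apply]
  exact sum_mem fun i _ => mul_mem (hf _) (hg _)

theorem convMul_convMul_apply_of_eq_sum (f g h : C →ₗ[R] B) {c : C} {ι : Type*} (s : Finset ι)
    (a b e : ι → C)
    (hc : TensorProduct.map comul LinearMap.id (comul (R := R) c) = ∑ i ∈ s, (a i ⊗ₜ b i) ⊗ₜ e i) :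
    (toConv f * toConv g * toConv h) c = ∑ i ∈ s, f (a i) * g (b i) * h (e i) := by
  have hsplit : TensorProduct.map (toConv f * toConv g).ofConv h =
      TensorProduct.map (LinearMap.mul' R B ∘ₗ TensorProduct.map f g) h ∘ₗ
        TensorProduct.map comul LinearMap.id := by
    rw [← TensorProduct.map_comp, LinearMap.comp_id]; rfl
  rw [LinearMap.convMul_apply, hsplit, LinearMap.comp_apply, hc]
  simp

end Algebra

section Antipode

variable {H : Type*} [Semiring H] [HopfAlgebra R H]

/-- `Δ ∘ S` is a right and `(S ⊗ S) ∘ τ ∘ Δ` a left convolution inverse of `Δ`. -/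
theorem HopfAlgebra.comul_comp_antipode :
    comul ∘ₗ antipode R = TensorProduct.map (antipode R) (antipode R) ∘ₗ
      (TensorProduct.comm R H H).toLinearMap ∘ₗ comul (R := R) (A := H) := by
  set inl := (Algebra.TensorProduct.includeLeft (R := R) (S := R) (A := H) (B := H))
  set inr := (Algebra.TensorProduct.includeRight (R := R) (A := H) (B := H))
  have hcomul : toConv (comul (R := R) (A := H)) =
      toConv (inl.toLinearMap ∘ₗ .id) * toConv (inr.toLinearMap ∘ₗ .id) := by
    rw [convMul_includeLeft_includeRight, TensorProduct.map_id, LinearMap.id_comp]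
  have hinv (φ : H →ₐ[R] H ⊗[R] H) :
      toConv (φ.toLinearMap ∘ₗ antipode R) * toConv (φ.toLinearMap ∘ₗ .id) = 1 := by
    rw [← toConv_ofConv (_ * _), ← LinearMap.algHom_comp_convMul_distrib, toConv_ofConv,
      LinearMap.antipode_mul_id, LinearMap.algHom_comp_convOne]
  have hleft : toConv (TensorProduct.map (antipode R) (antipode R) ∘ₗ
      (TensorProduct.comm R H H).toLinearMap ∘ₗ comul) * toConv comul = 1 := by
    rw [← convMul_includeRight_includeLeft, hcomul, mul_assoc,
      ← mul_assoc (toConv (inl.toLinearMap ∘ₗ _)), hinv, one_mul, hinv]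
  exact congrArg ofConv (left_inv_eq_right_inv hleft LinearMap.comul_right_inv).symm

end Antipode

section LeftCoideal

variable [Bialgebra R B]

theorem Subalgebra.isLeftCoideal_adjoin {s : Set B}
    (hs : ∀ a ∈ s, comul (R := R) a ∈ LinearMap.range
      (TensorProduct.map (LinearMap.id : B →ₗ[R] B) (toSubmodule (Algebra.adjoin R s)).subtype)) :
    (Algebra.adjoin R s).IsLeftCoideal :=
  fun _ ha => Algebra.adjoin_le (S := (Algebra.TensorProduct.map (AlgHom.id R B)
    (Algebra.adjoin R s).val).range.comap (Bialgebra.comulAlgHom R B)) hs ha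

theorem comul_comp_convMul (φ : C →ₗc[R] B) {g : C →ₗ[R] B}
    (hg : comul ∘ₗ g = TensorProduct.map g g ∘ₗ (TensorProduct.comm R C C).toLinearMap ∘ₗ comul) :
    comul ∘ₗ (toConv (φ : C →ₗ[R] B) * toConv g).ofConv =
      (toConv (ιₗ ∘ₗ φ) * toConv (ιᵣ ∘ₗ (toConv (φ : C →ₗ[R] B) * toConv g).ofConv) *
        toConv (ιₗ ∘ₗ g)).ofConv := by
  rw [← Bialgebra.toLinearMap_comulAlgHom, LinearMap.algHom_comp_convMul_distrib,
    Bialgebra.toLinearMap_comulAlgHom, hg, ← CoalgHomClass.map_comp_comul,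
    ← convMul_includeLeft_includeRight, ← convMul_includeRight_includeLeft, mul_assoc,
    ← mul_assoc (toConv (ιᵣ ∘ₗ _)), LinearMap.algHom_comp_convMul_distrib, toConv_ofConv,
    ← mul_assoc]

theorem comul_convMul_apply_of_eq_sum (φ : C →ₗc[R] B) {g : C →ₗ[R] B}
    (hg : comul ∘ₗ g = TensorProduct.map g g ∘ₗ (TensorProduct.comm R C C).toLinearMap ∘ₗ comul)
    {c : C} {ι : Type*} (s : Finset ι) (a b e : ι → C)
    (hc : TensorProduct.map comul LinearMap.id (comul (R := R) c) = ∑ i ∈ s, (a i ⊗ₜ b i) ⊗ₜ e i) :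
    comul (R := R) ((toConv (φ : C →ₗ[R] B) * toConv g) c) =
      ∑ i ∈ s, (φ (a i) * g (e i)) ⊗ₜ (toConv (φ : C →ₗ[R] B) * toConv g) (b i) := by
  rw [← LinearMap.comp_apply, comul_comp_convMul φ hg,
    convMul_convMul_apply_of_eq_sum _ _ _ s a b e hc]
  simp [Algebra.TensorProduct.tmul_mul_tmul]

theorem comul_convMul_apply_mem (φ : C →ₗc[R] B) {g : C →ₗ[R] B}
    (hg : comul ∘ₗ g = TensorProduct.map g g ∘ₗ (TensorProduct.comm R C C).toLinearMap ∘ₗ comul)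
    {W : Subalgebra R B} (hW : ∀ c, (toConv (φ : C →ₗ[R] B) * toConv g) c ∈ W) (c : C) :
    comul (R := R) ((toConv (φ : C →ₗ[R] B) * toConv g) c) ∈
      LinearMap.range
        (TensorProduct.map (LinearMap.id : B →ₗ[R] B) (Subalgebra.toSubmodule W).subtype) := by
  set T := (Algebra.TensorProduct.map (AlgHom.id R B) W.val).range
  have hleft (a : B) : a ⊗ₜ 1 ∈ T := ⟨a ⊗ₜ 1, rfl⟩
  have hright (w : B) (hw : w ∈ W) : 1 ⊗ₜ w ∈ T := ⟨1 ⊗ₜ ⟨w, hw⟩, rfl⟩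
  rw [← LinearMap.comp_apply, comul_comp_convMul φ hg]
  exact convMul_apply_mem (T := T)
    (convMul_apply_mem (fun c => hleft (φ c)) (fun c => hright _ (hW c))) (fun c => hleft (g c)) c

end LeftCoideal

end Convolution

section AntiCoalgebraMaps

variable {R C D : Type*} [CommSemiring R] [AddCommMonoid C] [Module R C] [Coalgebra R C]
  [AddCommMonoid D] [Module R D] [Coalgebra R D]

theorem comul_comp_coalgHom_comp_antipode {H : Type*} [Semiring H] [HopfAlgebra R H]
    (φ : H →ₗc[R] D) :
    comul ∘ₗ ((φ : H →ₗ[R] D) ∘ₗ antipode R) =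
      TensorProduct.map ((φ : H →ₗ[R] D) ∘ₗ antipode R) ((φ : H →ₗ[R] D) ∘ₗ antipode R) ∘ₗ
        (TensorProduct.comm R H H).toLinearMap ∘ₗ comul := by
  rw [← LinearMap.comp_assoc, ← CoalgHomClass.map_comp_comul, LinearMap.comp_assoc,
    HopfAlgebra.comul_comp_antipode, ← LinearMap.comp_assoc, ← TensorProduct.map_comp]

theorem comul_comp_comp_coalgHom {g : C →ₗ[R] D}
    (hg : comul ∘ₗ g = TensorProduct.map g g ∘ₗ (TensorProduct.comm R C C).toLinearMap ∘ₗ comul)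
    {B : Type*} [AddCommMonoid B] [Module R B] [Coalgebra R B] (ψ : B →ₗc[R] C) :
    comul ∘ₗ (g ∘ₗ ψ) = TensorProduct.map (g ∘ₗ ψ) (g ∘ₗ ψ) ∘ₗ
      (TensorProduct.comm R B B).toLinearMap ∘ₗ comul := by
  rw [← LinearMap.comp_assoc, hg, LinearMap.comp_assoc, LinearMap.comp_assoc,
    ← CoalgHomClass.map_comp_comul, ← LinearMap.comp_assoc _ (TensorProduct.map _ _),
    ← TensorProduct.map_comp_comm_eq, LinearMap.comp_assoc,
    ← LinearMap.comp_assoc _ (TensorProduct.map _ _), ← TensorProduct.map_comp]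

end AntiCoalgebraMaps

theorem map_comul_id_comul_tmul_eq_sum {R M N : Type*} [CommSemiring R]
    [AddCommMonoid M] [Module R M] [Coalgebra R M] [AddCommMonoid N] [Module R N] [Coalgebra R N]
    {x : M} {y : N} {ι κ : Type*} {s : Finset ι} {s' : Finset κ} {a b c : ι → M}
    {a' b' c' : κ → N}
    (hx : TensorProduct.map comul LinearMap.id (comul (R := R) x) = ∑ i ∈ s, (a i ⊗ₜ b i) ⊗ₜ c i)
    (hy : TensorProduct.map comul LinearMap.id (comul (R := R) y) =
      ∑ j ∈ s', (a' j ⊗ₜ b' j) ⊗ₜ c' j) :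
    TensorProduct.map comul LinearMap.id (comul (R := R) (x ⊗ₜ[R] y)) =
      ∑ ij ∈ s ×ˢ s', ((a ij.1 ⊗ₜ a' ij.2) ⊗ₜ (b ij.1 ⊗ₜ b' ij.2)) ⊗ₜ (c ij.1 ⊗ₜ c' ij.2) := by
  have hshuffle (X : M ⊗[R] M) (Y : N ⊗[R] N) :
      TensorProduct.map comul LinearMap.id (tensorTensorTensorComm R M M N N (X ⊗ₜ Y)) =
        TensorProduct.map (tensorTensorTensorComm R M M N N).toLinearMap LinearMap.id
          (tensorTensorTensorComm R (M ⊗[R] M) M (N ⊗[R] N) N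
            (TensorProduct.map comul LinearMap.id X ⊗ₜ TensorProduct.map comul LinearMap.id Y)) := by
    induction X using TensorProduct.induction_on with
    | zero => simp
    | add X₁ X₂ h₁ h₂ => simp only [TensorProduct.add_tmul, map_add, h₁, h₂]
    | tmul m₁ m₂ =>
      induction Y using TensorProduct.induction_on with
      | zero => simp
      | add Y₁ Y₂ h₁ h₂ => simp only [TensorProduct.tmul_add, map_add, h₁, h₂]
      | tmul n₁ n₂ => simp [TensorProduct.AlgebraTensorModule.tensorTensorTensorComm_eq]
  rw [TensorProduct.comul_tmul, TensorProduct.AlgebraTensorModule.tensorTensorTensorComm_eq,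
    hshuffle, hx, hy]
  simp only [TensorProduct.sum_tmul, TensorProduct.tmul_sum, map_sum, Finset.sum_product,
    TensorProduct.tensorTensorTensorComm_tmul, TensorProduct.map_tmul, LinearMap.id_apply,
    LinearEquiv.coe_coe]
  exact Finset.sum_comm

namespace FreeCommHopfData

variable {H A : Type*} [Ring H] [HopfAlgebra k H] [CommRing A] [HopfAlgebra k A]

def tCoalgHom (F : FreeCommHopfData k H A) : H →ₗc[k] A where
  toLinearMap := F.t
  counit_comp := LinearMap.ext F.counit_t
  map_comp_comul := LinearMap.ext fun x => (F.comul_t x).symm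

theorem pMap_eq_convMul (F : FreeCommHopfData k H A) :
    pMap F = (toConv (F.tCoalgHom : H →ₗ[k] A) *
      toConv ((F.tCoalgHom : H →ₗ[k] A) ∘ₗ antipode k)).ofConv :=
  rfl

theorem qMap_eq_convMul (F : FreeCommHopfData k H A) :
    qMap F = (toConv ((Bialgebra.mulCoalgHom k A).comp
        (Coalgebra.TensorProduct.map F.tCoalgHom F.tCoalgHom) : H ⊗[k] H →ₗ[k] A) *
      toConv (((F.tCoalgHom : H →ₗ[k] A) ∘ₗ antipode k) ∘ₗ
        (Bialgebra.mulCoalgHom k H : H ⊗[k] H →ₗ[k] H))).ofConv := by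
  simp only [qMap, LinearMap.convMul_def, TensorProduct.comul_def,
    TensorProduct.AlgebraTensorModule.map_eq,
    TensorProduct.AlgebraTensorModule.tensorTensorTensorComm_eq, LinearMap.comp_assoc]
  rw [← LinearMap.comp_assoc _ _ (TensorProduct.map (LinearMap.mul' k A) LinearMap.id),
    ← TensorProduct.map_comp, LinearMap.id_comp]
  rfl

end FreeCommHopfData

/-- The subalgebra `W_H` of `S(t_H)_Θ` generated by the elements `p_x` and
`q_{x,y}` is a left coideal subalgebra, `Δ(W_H) ⊆ S(t_H)_Θ ⊗ W_H`; explicitly, for any Sweedler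
representation `Δ²(x) = ∑ᵢ aᵢ ⊗ bᵢ ⊗ cᵢ` one has
`Δ(p_x) = ∑ᵢ t_{aᵢ} t_{S(cᵢ)} ⊗ p_{bᵢ}`, and similarly
`Δ(q_{x,y}) = ∑ᵢⱼ t_{aᵢ} t_{a'ⱼ} t_{S(cᵢ c'ⱼ)} ⊗ q_{bᵢ, b'ⱼ}`. -/
theorem stmt_15 (k : Type*) [Field k] (H : Type*) [Ring H] [HopfAlgebra k H]
    (A : Type*) [CommRing A] [HopfAlgebra k A] (F : FreeCommHopfData k H A) :
    (∀ a ∈ Algebra.adjoin k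
        ({a | ∃ x : H, a = pMap F x} ∪ {a | ∃ x y : H, a = qMap F (x ⊗ₜ[k] y)}),
      Coalgebra.comul (R := k) a ∈
        LinearMap.range (TensorProduct.map (LinearMap.id : A →ₗ[k] A)
          (Subalgebra.toSubmodule (Algebra.adjoin k
            ({a | ∃ x : H, a = pMap F x} ∪
              {a | ∃ x y : H, a = qMap F (x ⊗ₜ[k] y)}))).subtype)) ∧
    (∀ (x : H) (ι : Type) (s : Finset ι) (a b c : ι → H),
      (TensorProduct.map (Coalgebra.comul (R := k)) LinearMap.id)
          (Coalgebra.comul (R := k) x) = ∑ i ∈ s, (a i ⊗ₜ[k] b i) ⊗ₜ[k] c i →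
      Coalgebra.comul (R := k) (pMap F x) =
        ∑ i ∈ s, (F.t (a i) * F.t (HopfAlgebra.antipode (R := k) (c i))) ⊗ₜ[k] pMap F (b i)) ∧
    (∀ (x y : H) (ι κ : Type) (s : Finset ι) (s' : Finset κ)
        (a b c : ι → H) (a' b' c' : κ → H),
      (TensorProduct.map (Coalgebra.comul (R := k)) LinearMap.id)
          (Coalgebra.comul (R := k) x) = ∑ i ∈ s, (a i ⊗ₜ[k] b i) ⊗ₜ[k] c i →
      (TensorProduct.map (Coalgebra.comul (R := k)) LinearMap.id)
          (Coalgebra.comul (R := k) y) = ∑ j ∈ s', (a' j ⊗ₜ[k] b' j) ⊗ₜ[k] c' j →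
      Coalgebra.comul (R := k) (qMap F (x ⊗ₜ[k] y)) =
        ∑ i ∈ s, ∑ j ∈ s',
          (F.t (a i) * F.t (a' j) *
            F.t (HopfAlgebra.antipode (R := k) (c i * c' j))) ⊗ₜ[k]
          qMap F (b i ⊗ₜ[k] b' j)) := by
  set W := Algebra.adjoin k
    ({a | ∃ x : H, a = pMap F x} ∪ {a | ∃ x y : H, a = qMap F (x ⊗ₜ[k] y)})
  have hpW (z : H) : pMap F z ∈ W := Algebra.subset_adjoin (Or.inl ⟨z, rfl⟩)
  have hqW (z : H ⊗[k] H) : qMap F z ∈ W := by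
    induction z using TensorProduct.induction_on with
    | zero => simp
    | tmul x y => exact Algebra.subset_adjoin (Or.inr ⟨x, y, rfl⟩)
    | add z₁ z₂ h₁ h₂ => rw [map_add]; exact add_mem h₁ h₂
  have hp := comul_comp_coalgHom_comp_antipode F.tCoalgHom
  have hq := comul_comp_comp_coalgHom hp (Bialgebra.mulCoalgHom k H)
  rw [F.pMap_eq_convMul] at hpW
  rw [F.qMap_eq_convMul] at hqW
  refine ⟨Subalgebra.isLeftCoideal_adjoin ?_, fun x ι s a b c hx => ?_,
    fun x y ι κ s s' a b c a' b' c' hx hy => ?_⟩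
  · rintro _ (⟨x, rfl⟩ | ⟨x, y, rfl⟩)
    -- rewrite at `x` only: the generators of `W` in the goal also mention `pMap F` and `qMap F`
    · rw [LinearMap.congr_fun F.pMap_eq_convMul x]
      exact comul_convMul_apply_mem _ hp hpW x
    · rw [LinearMap.congr_fun F.qMap_eq_convMul (x ⊗ₜ y)]
      exact comul_convMul_apply_mem _ hq hqW (x ⊗ₜ y)
  · rw [F.pMap_eq_convMul]
    exact comul_convMul_apply_of_eq_sum _ hp s a b c hx
  · rw [F.qMap_eq_convMul, comul_convMul_apply_of_eq_sum _ hq (s ×ˢ s') _ _ _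
      (map_comul_id_comul_tmul_eq_sum hx hy), Finset.sum_product]
    rfl
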